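/- Let η : ℝ^{n-1} → ℝ be C¹ with |Dη(x')| ≤ C|x'|^{-(n+ε)} for |x'| ≥ 1 (n ∈ {2,3}, ε > 0), let S = graph(η) with upward unit normal n, and for r > 0 let ν be the outward unit normal along the boundary of the projection of S ∩ B_r onto ℝ^{n-1}. Then ∫_{∂B_r ∩ S} n·ν ds → 0 as r → ∞, where ds is the (n-2)-dimensional measure on the projected boundary curve. -/

import Mathlib

/-! The decay of `∇η` makes `η` bounded, say by `M`, and `K`-Lipschitz, so `η²` is
`2MK`-Lipschitz. For large `r` the level set `‖x‖² + η(x)² = r²` lies in the annulus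
`r/2 ≤ ‖x‖ ≤ r`, and comparing two of its points shows that the radial projection `x ↦ x/‖x‖`
is injective on it with a `(2MK + r)`-Lipschitz inverse. Hence its `(n-2)`-dimensional
Hausdorff measure is `O(r^(n-2))` times that of the unit sphere, which is finite for
`n ∈ {2, 3}`. The integrand is bounded by `|∇η| ≤ C (r/2)^(-(n+ε))`, so the integral is
`O(r^(-2-ε))`. -/

open MeasureTheory Real Filter

noncomputable section

abbrev Euc (n : ℕ) := EuclideanSpace ℝ (Fin n)

def lapl {n : ℕ} (f : Euc n → ℝ) (x : Euc n) : ℝ :=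
  ∑ i, fderiv ℝ (fun y => fderiv ℝ f y (EuclideanSpace.single i 1)) x (EuclideanSpace.single i 1)

def diverg {n : ℕ} (A : Euc n → Euc n) (x : Euc n) : ℝ :=
  ∑ i, fderiv ℝ A x (EuclideanSpace.single i 1) i

def kelvinInv {n : ℕ} (x : Euc n) : Euc n := (‖x‖ ^ 2)⁻¹ • x

def lastIdx (n : ℕ) (hn : 0 < n) : Fin n := ⟨n - 1, Nat.sub_lt hn Nat.one_pos⟩

def eLast (n : ℕ) (hn : 0 < n) : Euc n := EuclideanSpace.single (lastIdx n hn) 1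

def horiz {n : ℕ} (x : Euc n) : Euc (n - 1) :=
  WithLp.toLp 2 (fun i : Fin (n - 1) => x ⟨i.val, lt_of_lt_of_le i.isLt (Nat.sub_le n 1)⟩)

def vert {n : ℕ} (hn : 0 < n) (x : Euc n) : ℝ := x (lastIdx n hn)

def mkPt {n : ℕ} (x' : Euc (n - 1)) (t : ℝ) : Euc n :=
  WithLp.toLp 2 (fun j : Fin n => if h : (j : ℕ) < n - 1 then x' ⟨j, h⟩ else t)

open scoped NNReal ENNReal
open Metric

lemma hausdorffMeasure_le_of_le_mul_dist {X Y : Type*} [MetricSpace X] [MeasurableSpace X]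
    [BorelSpace X] [MetricSpace Y] [MeasurableSpace Y] [BorelSpace Y] {f : X → Y} {s : Set X}
    {K : ℝ≥0} (hf : ∀ x ∈ s, ∀ y ∈ s, dist x y ≤ K * dist (f x) (f y)) {d : ℝ} (hd : 0 ≤ d) :
    μH[d] s ≤ (K : ℝ≥0∞) ^ d * μH[d] (f '' s) := by
  have hanti : AntilipschitzWith K (s.domRestrict f) :=
    AntilipschitzWith.of_le_mul_dist fun x y => hf x x.2 y y.2
  calc μH[d] s = μH[d] (((↑) : s → X) '' Set.univ) := by rw [Set.image_univ, Subtype.range_coe]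
    _ = μH[d] (Set.univ : Set s) := isometry_subtype_coe.hausdorffMeasure_image (.inl hd) _
    _ ≤ (K : ℝ≥0∞) ^ d * μH[d] (s.domRestrict f '' Set.univ) := hanti.le_hausdorffMeasure_image hd _
    _ = (K : ℝ≥0∞) ^ d * μH[d] (f '' s) := by rw [Set.image_univ, Set.range_domRestrict]

lemma hausdorffMeasure_zero_sphere_euclideanSpace_one_ne_top :
    μH[0] (sphere (0 : EuclideanSpace ℝ (Fin 1)) 1) ≠ ∞ := by
  set e : EuclideanSpace ℝ (Fin 1) := EuclideanSpace.single 0 1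
  have hsub : sphere (0 : EuclideanSpace ℝ (Fin 1)) 1 ⊆ {e} ∪ {-e} := by
    intro x hx
    have hx0 : |x 0| = 1 := by
      simpa [EuclideanSpace.norm_eq, Real.sqrt_sq_eq_abs] using mem_sphere_zero_iff_norm.1 hx
    rcases abs_eq (zero_le_one' ℝ) |>.1 hx0 with h | h
    · left; ext i; fin_cases i; simp [e, h]
    · right; ext i; fin_cases i; simp [e, h]
  refine ne_top_of_le_ne_top ?_ ((measure_mono hsub).trans (measure_union_le _ _))
  simp

lemma hausdorffMeasure_one_sphere_euclideanSpace_two_ne_top :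
    μH[1] (sphere (0 : EuclideanSpace ℝ (Fin 2)) 1) ≠ ∞ := by
  have hf := Complex.orthonormalBasisOneI.repr.lipschitz.comp (lipschitzWith_circleMap 0 1)
  have hsub : sphere (0 : EuclideanSpace ℝ (Fin 2)) 1 ⊆
      (Complex.orthonormalBasisOneI.repr ∘ circleMap 0 1) '' Set.Icc (-π) π := by
    intro x hx
    set z := Complex.orthonormalBasisOneI.repr.symm x
    have hz : ‖z‖ = 1 := by rw [LinearIsometryEquiv.norm_map, ← mem_sphere_zero_iff_norm]; exact hx
    refine ⟨z.arg, ⟨(Complex.neg_pi_lt_arg z).le, Complex.arg_le_pi z⟩, ?_⟩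
    have : circleMap 0 1 z.arg = z := by
      simpa [circleMap, hz] using Complex.norm_mul_exp_arg_mul_I z
    simp only [Function.comp_apply, this, z, LinearIsometryEquiv.apply_symm_apply]
  refine ne_top_of_le_ne_top ?_
    ((measure_mono hsub).trans (hf.hausdorffMeasure_image_le zero_le_one _))
  simp [hausdorffMeasure_real]

section Decay

variable {E : Type*} [NormedAddCommGroup E] [InnerProductSpace ℝ E] {η : E → ℝ} {C p : ℝ}

lemma norm_fderiv_eq_norm_gradient [CompleteSpace E] (f : E → ℝ) (x : E) :
    ‖fderiv ℝ f x‖ = ‖gradient f x‖ := by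
  rw [← toDual_gradient, LinearIsometryEquiv.norm_map]

lemma abs_sub_le_of_norm_gradient_le_rpow [CompleteSpace E] (hη : Differentiable ℝ η)
    (hC : 0 ≤ C) (hp : 1 < p) (hdecay : ∀ x, 1 ≤ ‖x‖ → ‖gradient η x‖ ≤ C * ‖x‖ ^ (-p))
    {u : E} (hu : ‖u‖ = 1) {s : ℝ} (hs : 1 ≤ s) :
    |η (s • u) - η u| ≤ C / (p - 1) := by
  have hp' : 0 < p - 1 := sub_pos.2 hp
  set B : ℝ → ℝ := fun t => C / (p - 1) * (1 - t ^ (1 - p))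
  have hray : ∀ t : ℝ, HasDerivAt (fun t : ℝ => η (t • u) - η u) (fderiv ℝ η (t • u) u) t :=
    fun t => by
      simpa using ((hη _).hasFDerivAt.comp_hasDerivAt t
        ((hasDerivAt_id t).smul_const u)).sub_const (η u)
  have hB : ∀ t : ℝ, 0 < t → HasDerivAt B (C * t ^ (-p)) t := fun t ht => by
    refine (((Real.hasDerivAt_rpow_const (p := 1 - p) (Or.inl ht.ne')).const_sub 1).const_mul
      (C / (p - 1))).congr_deriv ?_
    rw [show 1 - p - 1 = -p by ring]
    field_simp
    ring
  have hderiv_le : ∀ t ∈ Set.Ico 1 s, ‖fderiv ℝ η (t • u) u‖ ≤ C * t ^ (-p) := by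
    rintro t ⟨ht, -⟩
    have htu : ‖t • u‖ = t := by rw [norm_smul, hu, mul_one, Real.norm_of_nonneg (by linarith)]
    calc ‖fderiv ℝ η (t • u) u‖ ≤ ‖fderiv ℝ η (t • u)‖ * ‖u‖ := (fderiv ℝ η (t • u)).le_opNorm u
      _ = ‖gradient η (t • u)‖ := by rw [hu, mul_one, norm_fderiv_eq_norm_gradient]
      _ ≤ C * t ^ (-p) := by simpa only [htu] using hdecay (t • u) (by rw [htu]; exact ht)
  have key := image_norm_le_of_norm_deriv_right_le_deriv_boundary'
    (fun t _ => (hray t).continuousAt.continuousWithinAt) (fun t _ => (hray t).hasDerivWithinAt)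
    (by simp [B]) (fun t ht => (hB t (by linarith [ht.1])).continuousAt.continuousWithinAt)
    (fun t ht => (hB t (by linarith [ht.1])).hasDerivWithinAt) hderiv_le ⟨hs, le_rfl⟩
  exact (Real.norm_eq_abs _ ▸ key).trans <| mul_le_of_le_one_right (div_nonneg hC hp'.le)
    (sub_le_self _ (Real.rpow_nonneg (by linarith) _))

lemma exists_abs_le_of_norm_gradient_le_rpow [ProperSpace E] (hη : Differentiable ℝ η)
    (hC : 0 ≤ C) (hp : 1 < p) (hdecay : ∀ x, 1 ≤ ‖x‖ → ‖gradient η x‖ ≤ C * ‖x‖ ^ (-p)) :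
    ∃ M : ℝ≥0, ∀ x, |η x| ≤ M := by
  obtain ⟨M₀, hM₀⟩ := (isCompact_closedBall (0 : E) 1).exists_bound_of_continuousOn
    hη.continuous.continuousOn
  have hball : ∀ x, ‖x‖ ≤ 1 → |η x| ≤ M₀ := fun x hx => hM₀ x (mem_closedBall_zero_iff.2 hx)
  refine ⟨(M₀ + C / (p - 1)).toNNReal, fun x => le_trans ?_ (Real.le_coe_toNNReal _)⟩
  rcases le_or_gt ‖x‖ 1 with hx | hx
  · linarith [hball x hx, div_nonneg hC (sub_pos.2 hp).le]
  · have hx0 : ‖x‖ ≠ 0 := by positivity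
    have hu : ‖‖x‖⁻¹ • x‖ = 1 := by rw [norm_smul, norm_inv, norm_norm, inv_mul_cancel₀ hx0]
    have hray := abs_sub_le_of_norm_gradient_le_rpow hη hC hp hdecay hu hx.le
    rw [smul_smul, mul_inv_cancel₀ hx0, one_smul] at hray
    linarith [abs_sub_abs_le_abs_sub (η x) (η (‖x‖⁻¹ • x)), hball _ hu.le]

lemma exists_lipschitzWith_of_norm_gradient_le_rpow [ProperSpace E] (hη : ContDiff ℝ 1 η)
    (hC : 0 ≤ C) (hp : 0 ≤ p) (hdecay : ∀ x, 1 ≤ ‖x‖ → ‖gradient η x‖ ≤ C * ‖x‖ ^ (-p)) :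
    ∃ K, LipschitzWith K η := by
  obtain ⟨G, hG⟩ := (isCompact_closedBall (0 : E) 1).exists_bound_of_continuousOn
    (hη.continuous_fderiv one_ne_zero).continuousOn
  refine ⟨(max G C).toNNReal, lipschitzWith_of_nnnorm_fderiv_le (hη.differentiable one_ne_zero)
    fun x => ?_⟩
  rw [← NNReal.coe_le_coe, coe_nnnorm, Real.coe_toNNReal _ (hC.trans (le_max_right G C))]
  rcases le_or_gt ‖x‖ 1 with hx | hx
  · exact (hG x (mem_closedBall_zero_iff.2 hx)).trans (le_max_left G C)
  · calc ‖fderiv ℝ η x‖ = ‖gradient η x‖ := norm_fderiv_eq_norm_gradient η x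
      _ ≤ C * ‖x‖ ^ (-p) := hdecay x hx.le
      _ ≤ C * 1 := by gcongr; exact Real.rpow_le_one_of_one_le_of_nonpos hx.le (neg_nonpos.2 hp)
      _ ≤ max G C := by rw [mul_one]; exact le_max_right G C

end Decay

lemma lipschitzWith_sq_of_abs_le {X : Type*} [PseudoMetricSpace X] {η : X → ℝ} {K M : ℝ≥0}
    (hK : LipschitzWith K η) (hM : ∀ x, |η x| ≤ M) :
    LipschitzWith (2 * M * K) (fun x => η x ^ 2) := by
  refine LipschitzWith.of_dist_le_mul fun x y => ?_
  rw [Real.dist_eq, sq_sub_sq, abs_mul, NNReal.coe_mul, NNReal.coe_mul, mul_assoc]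
  have hsum : |η x + η y| ≤ 2 * M := by linarith [abs_add_le (η x) (η y), hM x, hM y]
  have hdiff : |η x - η y| ≤ K * dist x y := by rw [← Real.dist_eq]; exact hK.dist_le_mul x y
  push_cast
  exact mul_le_mul hsum hdiff (abs_nonneg _) (by positivity)

lemma half_le_norm_of_sq_add_sq_eq {E : Type*} [SeminormedAddCommGroup E] {x : E} {a M r : ℝ}
    (hx : ‖x‖ ^ 2 + a ^ 2 = r ^ 2) (ha : |a| ≤ M) (hr : 2 * M ≤ r) : r / 2 ≤ ‖x‖ ∧ ‖x‖ ≤ r := by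
  have hM : 0 ≤ M := (abs_nonneg a).trans ha
  have ha2 : a ^ 2 ≤ M ^ 2 := by rw [← sq_abs]; gcongr
  constructor <;> nlinarith [norm_nonneg x]

section LevelSet

variable {E : Type*} [NormedAddCommGroup E] [NormedSpace ℝ E] {φ : E → ℝ} {D : ℝ≥0}

lemma norm_sub_le_of_sq_norm_add_eq (hφ : LipschitzWith D φ) {x y : E}
    (hxy : ‖x‖ ^ 2 + φ x = ‖y‖ ^ 2 + φ y) (hx : 0 < ‖x‖) (hle : ‖x‖ ≤ ‖y‖) (hD : D ≤ ‖y‖) :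
    ‖x - y‖ ≤ (D + ‖x‖) * ‖‖x‖⁻¹ • x - ‖y‖⁻¹ • y‖ := by
  set a := ‖x‖
  set b := ‖y‖
  set δ := ‖a⁻¹ • x - b⁻¹ • y‖
  have hb : 0 < b := hx.trans_le hle
  have hv : ‖b⁻¹ • y‖ = 1 := by rw [norm_smul, norm_inv, norm_norm, inv_mul_cancel₀ hb.ne']
  have hsplit : ‖x - y‖ ≤ (b - a) + a * δ := by
    have : x - y = a • (a⁻¹ • x - b⁻¹ • y) - (b - a) • (b⁻¹ • y) := by
      rw [smul_sub, smul_inv_smul₀ hx.ne', sub_smul, smul_inv_smul₀ hb.ne']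
      abel
    rw [this]
    refine (norm_sub_le _ _).trans ?_
    rw [norm_smul, norm_smul, hv, Real.norm_of_nonneg hx.le, Real.norm_of_nonneg (sub_nonneg.2 hle)]
    linarith
  have hlip : φ x - φ y ≤ D * ‖x - y‖ := by
    have := hφ.dist_le_mul x y
    rw [Real.dist_eq, dist_eq_norm] at this
    exact (le_abs_self _).trans this
  have hδ : 0 ≤ δ := norm_nonneg _
  have hgap : b - a ≤ D * δ := by
    have : (b - a) * a ≤ (D * δ) * a := by nlinarith
    exact le_of_mul_le_mul_right this hx
  linarith

lemma hausdorffMeasure_levelSet_le [MeasurableSpace E] [BorelSpace E] (hφ : LipschitzWith D φ)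
    {c : ℝ} {R : ℝ≥0} (hbounds : ∀ x, ‖x‖ ^ 2 + φ x = c → 0 < ‖x‖ ∧ D ≤ ‖x‖ ∧ ‖x‖ ≤ R)
    {d : ℝ} (hd : 0 ≤ d) :
    μH[d] {x | ‖x‖ ^ 2 + φ x = c} ≤ ((D + R : ℝ≥0) : ℝ≥0∞) ^ d * μH[d] (sphere (0 : E) 1) := by
  have hcoLip : ∀ x y, ‖x‖ ^ 2 + φ x = c → ‖y‖ ^ 2 + φ y = c → ‖x‖ ≤ ‖y‖ →
      dist x y ≤ (D + R : ℝ≥0) * dist (‖x‖⁻¹ • x) (‖y‖⁻¹ • y) := fun x y hx hy hle => by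
    obtain ⟨hx0, -, hxR⟩ := hbounds x hx
    rw [dist_eq_norm, dist_eq_norm, NNReal.coe_add]
    refine (norm_sub_le_of_sq_norm_add_eq hφ (hx.trans hy.symm) hx0 hle (hbounds y hy).2.1).trans ?_
    gcongr
  refine (hausdorffMeasure_le_of_le_mul_dist (f := fun x : E => ‖x‖⁻¹ • x) (K := D + R)
    (fun x hx y hy => ?_) hd).trans ?_
  · rcases le_total ‖x‖ ‖y‖ with hle | hle
    · exact hcoLip x y hx hy hle
    · rw [dist_comm x, dist_comm (‖x‖⁻¹ • x)]
      exact hcoLip y x hy hx hle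
  · gcongr
    rintro _ ⟨x, hx, rfl⟩
    rw [mem_sphere_zero_iff_norm, norm_smul, norm_inv, norm_norm,
      inv_mul_cancel₀ (hbounds x hx).1.ne']

end LevelSet

lemma tendsto_half_rpow_neg_mul_two_mul_rpow {d p : ℝ} (h : d < p) :
    Tendsto (fun r : ℝ => (r / 2) ^ (-p) * (2 * r) ^ d) atTop (nhds 0) := by
  have hlim := (tendsto_rpow_neg_atTop (sub_pos.2 h)).const_mul ((2 : ℝ) ^ (p + d))
  rw [mul_zero] at hlim
  refine hlim.congr' ((eventually_gt_atTop 0).mono fun r hr => ?_)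
  dsimp only
  rw [Real.div_rpow hr.le zero_le_two, Real.mul_rpow zero_le_two hr.le, Real.rpow_neg hr.le,
    Real.rpow_neg zero_le_two, Real.rpow_add two_pos, Real.rpow_sub hr, Real.rpow_neg hr.le]
  field_simp

lemma abs_inner_le_norm_of_unit_normal {E : Type*} [NormedAddCommGroup E] [InnerProductSpace ℝ E]
    (g v : E) : |inner ℝ (-(Real.sqrt (1 + ‖g‖ ^ 2))⁻¹ • g) (‖v‖⁻¹ • v)| ≤ ‖g‖ := by
  have hs : 1 ≤ Real.sqrt (1 + ‖g‖ ^ 2) := Real.one_le_sqrt.2 (by nlinarith)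
  have hn : ‖-(Real.sqrt (1 + ‖g‖ ^ 2))⁻¹ • g‖ ≤ ‖g‖ := by
    rw [norm_smul, norm_neg, norm_inv, Real.norm_of_nonneg (by positivity)]
    exact mul_le_of_le_one_left (norm_nonneg g) (inv_le_one_of_one_le₀ hs)
  have hv : ‖‖v‖⁻¹ • v‖ ≤ 1 := by
    rcases eq_or_ne v 0 with rfl | hv
    · simp
    · rw [norm_smul, norm_inv, norm_norm, inv_mul_cancel₀ (norm_ne_zero_iff.2 hv)]
  calc _ ≤ ‖-(Real.sqrt (1 + ‖g‖ ^ 2))⁻¹ • g‖ * ‖‖v‖⁻¹ • v‖ := abs_real_inner_le_norm _ _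
    _ ≤ ‖g‖ * 1 := by gcongr
    _ = ‖g‖ := mul_one _

section Flux

variable {E : Type*} [NormedAddCommGroup E] [InnerProductSpace ℝ E] [MeasurableSpace E]
  [BorelSpace E] {η : E → ℝ} {f : E → ℝ} {C p d : ℝ}

lemma norm_setIntegral_levelSet_le [CompleteSpace E] (hd : 0 ≤ d)
    (hsphere : μH[d] (sphere (0 : E) 1) ≠ ∞) (hC : 0 ≤ C) (hp : 0 ≤ p)
    (hdecay : ∀ x, 1 ≤ ‖x‖ → ‖gradient η x‖ ≤ C * ‖x‖ ^ (-p)) {M K : ℝ≥0}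
    (hM : ∀ x, |η x| ≤ M) (hK : LipschitzWith K η) (hf : ∀ x, |f x| ≤ ‖gradient η x‖) {r : ℝ}
    (hr : 2 * M + 2 * (2 * M * K : ℝ≥0) + 2 ≤ r) :
    ‖∫ x in {x : E | ‖x‖ ^ 2 + η x ^ 2 = r ^ 2}, f x ∂μH[d]‖
      ≤ C * (μH[d] (sphere (0 : E) 1)).toReal * ((r / 2) ^ (-p) * (2 * r) ^ d) := by
  set D := 2 * M * K
  set A := {x : E | ‖x‖ ^ 2 + η x ^ 2 = r ^ 2}
  have hMr : 2 * (M : ℝ) ≤ r := by linarith [NNReal.coe_nonneg D]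
  have hDr : 2 * (D : ℝ) + 2 ≤ r := by linarith [NNReal.coe_nonneg M]
  have hbounds : ∀ x ∈ A, r / 2 ≤ ‖x‖ ∧ ‖x‖ ≤ r := fun x hx =>
    half_le_norm_of_sq_add_sq_eq hx (hM x) hMr
  have hμA : μH[d] A ≤ ((D + r.toNNReal : ℝ≥0) : ℝ≥0∞) ^ d * μH[d] (sphere (0 : E) 1) := by
    refine hausdorffMeasure_levelSet_le (lipschitzWith_sq_of_abs_le hK hM) (fun x hx => ?_) hd
    obtain ⟨hlo, hhi⟩ := hbounds x hx
    exact ⟨by linarith, by linarith, hhi.trans (Real.le_coe_toNNReal r)⟩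
  have hfin : ((D + r.toNNReal : ℝ≥0) : ℝ≥0∞) ^ d * μH[d] (sphere (0 : E) 1) ≠ ∞ :=
    ENNReal.mul_ne_top (ENNReal.rpow_ne_top_of_nonneg hd ENNReal.coe_ne_top) hsphere
  have hμA' : μH[d].real A ≤ (2 * r) ^ d * (μH[d] (sphere (0 : E) 1)).toReal := by
    refine (ENNReal.toReal_mono hfin hμA).trans ?_
    rw [ENNReal.toReal_mul, ← ENNReal.toReal_rpow, ENNReal.coe_toReal, NNReal.coe_add,
      Real.coe_toNNReal r (by linarith)]
    gcongr <;> linarith [NNReal.coe_nonneg D]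
  have hfA : ∀ x ∈ A, ‖f x‖ ≤ C * (r / 2) ^ (-p) := fun x hx => by
    calc ‖f x‖ ≤ ‖gradient η x‖ := hf x
      _ ≤ C * ‖x‖ ^ (-p) := hdecay x (by linarith [(hbounds x hx).1])
      _ ≤ C * (r / 2) ^ (-p) := mul_le_mul_of_nonneg_left
        (Real.rpow_le_rpow_of_nonpos (by linarith) (hbounds x hx).1 (by linarith)) hC
  calc ‖∫ x in A, f x ∂μH[d]‖ ≤ C * (r / 2) ^ (-p) * μH[d].real A :=
        norm_setIntegral_le_of_norm_le_const (hμA.trans_lt hfin.lt_top) hfA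
    _ ≤ C * (r / 2) ^ (-p) * ((2 * r) ^ d * (μH[d] (sphere (0 : E) 1)).toReal) :=
        mul_le_mul_of_nonneg_left hμA' (mul_nonneg hC (Real.rpow_nonneg (by linarith) _))
    _ = _ := by ring

lemma tendsto_setIntegral_levelSet_of_abs_le_norm_gradient [ProperSpace E] (hd : 0 ≤ d)
    (hsphere : μH[d] (sphere (0 : E) 1) ≠ ∞) (hC : 0 ≤ C) (hp : 1 < p) (hdp : d < p)
    (hη : ContDiff ℝ 1 η) (hdecay : ∀ x, 1 ≤ ‖x‖ → ‖gradient η x‖ ≤ C * ‖x‖ ^ (-p))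
    (hf : ∀ x, |f x| ≤ ‖gradient η x‖) :
    Tendsto (fun r : ℝ => ∫ x in {x : E | ‖x‖ ^ 2 + η x ^ 2 = r ^ 2}, f x ∂μH[d])
      atTop (nhds 0) := by
  obtain ⟨M, hM⟩ :=
    exists_abs_le_of_norm_gradient_le_rpow (hη.differentiable one_ne_zero) hC hp hdecay
  obtain ⟨K, hK⟩ := exists_lipschitzWith_of_norm_gradient_le_rpow hη hC (by linarith) hdecay
  have hlim := (tendsto_half_rpow_neg_mul_two_mul_rpow hdp).const_mul
    (C * (μH[d] (sphere (0 : E) 1)).toReal)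
  rw [mul_zero] at hlim
  refine squeeze_zero_norm' ?_ hlim
  filter_upwards [eventually_ge_atTop (2 * M + 2 * (2 * M * K : ℝ≥0) + 2 : ℝ)] with r hr
  exact norm_setIntegral_levelSet_le hd hsphere hC (by linarith) hdecay hM hK hf hr

end Flux

/-- The boundary flux term `∫_{∂B_r ∩ S} n·ν ds` tends to zero as `r → ∞`. -/
theorem normal_flux_tendsto_zero {n : ℕ} (hn : n = 2 ∨ n = 3) (ε C : ℝ)
    (hε : 0 < ε) (hC : 0 < C) (η : Euc (n - 1) → ℝ) (hη : ContDiff ℝ 1 η)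
    (hdecay : ∀ x', 1 ≤ ‖x'‖ → ‖gradient η x'‖ ≤ C * ‖x'‖ ^ (-((n : ℝ) + ε))) :
    Tendsto (fun r : ℝ =>
      ∫ x' in {x' : Euc (n - 1) | ‖x'‖ ^ 2 + (η x') ^ 2 = r ^ 2},
        (inner ℝ (-(Real.sqrt (1 + ‖gradient η x'‖ ^ 2))⁻¹ • gradient η x')
          ((‖x' + η x' • gradient η x'‖)⁻¹ • (x' + η x' • gradient η x')) : ℝ)
        ∂μH[(n : ℝ) - 2]) atTop (nhds 0) := by
  have hn2 : (2 : ℝ) ≤ n := by rcases hn with rfl | rfl <;> norm_num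
  have hsphere : μH[(n : ℝ) - 2] (sphere (0 : Euc (n - 1)) 1) ≠ ∞ := by
    rcases hn with rfl | rfl
    · rw [show ((2 : ℕ) : ℝ) - 2 = 0 by norm_num]
      exact hausdorffMeasure_zero_sphere_euclideanSpace_one_ne_top
    · rw [show ((3 : ℕ) : ℝ) - 2 = 1 by norm_num]
      exact hausdorffMeasure_one_sphere_euclideanSpace_two_ne_top
  exact tendsto_setIntegral_levelSet_of_abs_le_norm_gradient (by linarith) hsphere hC.le
    (by linarith) (by linarith) hη hdecay fun x' => abs_inner_le_norm_of_unit_normal _ _
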